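/- arXiv:2603.11062 — 7 statements merged into one kernel-verified Lean document; each statement's English description precedes it below -/
import Mathlib

section
/- Let A = {a_1,...,a_n} and B = {b_1,...,b_n} be finite multisets of real numbers and let r > 0. Suppose the multiset sum A + rA (all pairwise sums a_i + r·a_j counted with multiplicity) equals the multiset B - rB (all differences b_i - r·b_j), and suppose b_i - a_i = C for all i, a common constant. Then A is symmetric about the point C(1-r)/(2r); i.e., as multisets, A = { C(1-r)/r - a : a ∈ A }. -/
/-!
Encode a multiset `S` of reals as `∑_{s ∈ S} [s]` in the group ring `ℤ[ℝ]`, so that multisets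
of pairwise sums become products. As `ℝ` is a torsion-free ordered group, `ℤ[ℝ]` has no zero
divisors. Writing `b = a + C` gives `B - rB = A + (C(1 - r) - rA)`, so `A + rA = A + (C(1 - r) - rA)`;
cancelling the nonempty `A` leaves `rA = C(1 - r) - rA`, and dividing by `r` gives the symmetry.
-/

open AddMonoidAlgebra

namespace Multiset

variable {G : Type*}

noncomputable def toAddMonoidAlgebra (s : Multiset G) : ℤ[G] :=
  (s.map fun x => single x 1).sum

@[simp]
lemma toAddMonoidAlgebra_zero : (0 : Multiset G).toAddMonoidAlgebra = 0 := rfl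

@[simp]
lemma toAddMonoidAlgebra_cons (x : G) (s : Multiset G) :
    (x ::ₘ s).toAddMonoidAlgebra = single x 1 + s.toAddMonoidAlgebra := by
  simp [toAddMonoidAlgebra]

@[simp]
lemma toAddMonoidAlgebra_add (s t : Multiset G) :
    (s + t).toAddMonoidAlgebra = s.toAddMonoidAlgebra + t.toAddMonoidAlgebra := by
  simp [toAddMonoidAlgebra]

lemma coeff_toAddMonoidAlgebra [DecidableEq G] (s : Multiset G) (x : G) :
    s.toAddMonoidAlgebra.coeff x = s.count x := by
  induction s using Multiset.induction with
  | empty => simp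
  | cons y s ih =>
    rw [toAddMonoidAlgebra_cons, coeff_add, Finsupp.add_apply, ih, coeff_single,
      Finsupp.single_apply, count_cons]
    split_ifs <;> subst_vars <;> simp_all [add_comm]

lemma toAddMonoidAlgebra_injective :
    Function.Injective (toAddMonoidAlgebra : Multiset G → ℤ[G]) := by
  classical
  intro s t h
  ext x
  have hx := congrArg (fun p : ℤ[G] => p.coeff x) h
  simp only [coeff_toAddMonoidAlgebra] at hx
  exact_mod_cast hx

lemma toAddMonoidAlgebra_map_add_left [AddMonoid G] (x : G) (t : Multiset G) :
    (t.map (x + ·)).toAddMonoidAlgebra = single x 1 * t.toAddMonoidAlgebra := by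
  induction t using Multiset.induction with
  | empty => simp
  | cons y t ih => simp [ih, mul_add]

lemma toAddMonoidAlgebra_map_add_product [AddMonoid G] (s t : Multiset G) :
    ((s ×ˢ t).map fun p => p.1 + p.2).toAddMonoidAlgebra =
      s.toAddMonoidAlgebra * t.toAddMonoidAlgebra := by
  induction s using Multiset.induction with
  | empty => simp
  | cons x s ih =>
    rw [cons_product, map_add, toAddMonoidAlgebra_add, ih, toAddMonoidAlgebra_cons, add_mul,
      map_map, ← toAddMonoidAlgebra_map_add_left]
    rfl

lemma map_add_product_left_cancel [AddMonoid G] [UniqueSums G] {s t u : Multiset G}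
    (hs : s ≠ 0)
    (h : (s ×ˢ t).map (fun p => p.1 + p.2) = (s ×ˢ u).map (fun p => p.1 + p.2)) : t = u := by
  have hs' : s.toAddMonoidAlgebra ≠ 0 := by
    rw [← toAddMonoidAlgebra_zero]
    exact toAddMonoidAlgebra_injective.ne hs
  apply toAddMonoidAlgebra_injective
  apply mul_left_cancel₀ hs'
  rw [← toAddMonoidAlgebra_map_add_product, ← toAddMonoidAlgebra_map_add_product, h]

lemma map_prodMap_product {α β γ δ : Type*} (f : α → γ) (g : β → δ) (s : Multiset α)
    (t : Multiset β) : (s ×ˢ t).map (Prod.map f g) = s.map f ×ˢ t.map g := by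
  induction s using Multiset.induction <;> simp_all [map_map]

lemma map_add_product_map [Add G] {α β : Type*} (f : α → G) (g : β → G) (s : Multiset α)
    (t : Multiset β) :
    (s.map f ×ˢ t.map g).map (fun p => p.1 + p.2) = (s ×ˢ t).map (fun p => f p.1 + g p.2) := by
  rw [← map_prodMap_product, map_map]
  rfl

end Multiset

/-- Lemma 2.1: if the multiset `A + rA` equals `B - rB` and `b i - a i = C` for all `i`,
then `A` is symmetric about `C(1-r)/(2r)`, i.e. `A = C(1-r)/r - A` as multisets. -/
theorem stmt_0 (n : ℕ) (a b : Fin n → ℝ) (r C : ℝ) (hr : 0 < r)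
    (hC : ∀ i, b i - a i = C)
    (hmul : Multiset.map (fun p : Fin n × Fin n => a p.1 + r * a p.2) Finset.univ.val
      = Multiset.map (fun p : Fin n × Fin n => b p.1 - r * b p.2) Finset.univ.val) :
    Multiset.map a Finset.univ.val
      = Multiset.map (fun i => C * (1 - r) / r - a i) Finset.univ.val := by
  set A := Multiset.map a Finset.univ.val
  rcases eq_or_ne A 0 with hA | hA
  · rw [hA, eq_comm, Multiset.map_eq_zero]
    exact Multiset.map_eq_zero.mp hA
  have hsum : (A ×ˢ A.map (r * ·)).map (fun p => p.1 + p.2)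
      = (A ×ˢ A.map (C * (1 - r) - r * ·)).map (fun p => p.1 + p.2) := by
    simp only [A, Multiset.map_map, Function.comp_def, Multiset.map_add_product_map]
    exact hmul.trans (Multiset.map_congr rfl fun p _ => by linear_combination hC p.1 - r * hC p.2)
  have hscaled := Multiset.map_add_product_left_cancel hA hsum
  calc A = (A.map (r * ·)).map (· / r) := by simp [Multiset.map_map, hr.ne']
    _ = (A.map (C * (1 - r) - r * ·)).map (· / r) := by rw [hscaled]
    _ = _ := by
      simp only [A, Multiset.map_map]
      refine Multiset.map_congr rfl fun i _ => ?_
      simp only [Function.comp_apply]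
      field_simp
end

section
/- Let A = {a_1,...,a_n} with a_1 < a_2 < ... < a_n and B = {b_1,...,b_n} with b_1 < b_2 < ... < b_n be finite sets of reals, and let r > 0. Assume (1) the sets {a_i + r·a_j : 1 ≤ i,j ≤ n} and {b_i - r·b_j : 1 ≤ i,j ≤ n} are equal and each has exactly n² elements; (2) the set {r·b_j + a_i : 1 ≤ i,j ≤ n} has n² elements; (3) the set {-r·a_i + b_j : 1 ≤ i,j ≤ n} has n² elements. Then b_i - r·b_n = a_i + r·a_1 for every 1 ≤ i ≤ n. -/
/-- Lemma 2.2: under the stated distinctness/equality assumptions,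
`b i - r * b n = a i + r * a 1` for all `i`. -/
theorem stmt_1 (n : ℕ) (a b : Fin (n + 1) → ℝ) (r : ℝ) (hr : 0 < r)
    (ha : StrictMono a) (hb : StrictMono b)
    (hset : Set.range (fun p : Fin (n + 1) × Fin (n + 1) => a p.1 + r * a p.2)
      = Set.range (fun p : Fin (n + 1) × Fin (n + 1) => b p.1 - r * b p.2))
    (hinjA : Function.Injective (fun p : Fin (n + 1) × Fin (n + 1) => a p.1 + r * a p.2))
    (hinjB : Function.Injective (fun p : Fin (n + 1) × Fin (n + 1) => b p.1 - r * b p.2))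
    (hinj2 : Function.Injective (fun p : Fin (n + 1) × Fin (n + 1) => r * b p.2 + a p.1))
    (hinj3 : Function.Injective (fun p : Fin (n + 1) × Fin (n + 1) => -(r * a p.1) + b p.2)) :
    ∀ i, b i - r * b (Fin.last n) = a i + r * a 0 := by
  have hS2T : ∀ u v : Fin (n + 1), ∃ q : Fin (n + 1) × Fin (n + 1),
      a u + r * a v = b q.1 - r * b q.2 := by
    intro u v
    have hmem : a u + r * a v ∈
        Set.range (fun p : Fin (n + 1) × Fin (n + 1) => b p.1 - r * b p.2) := by
      rw [← hset]; exact ⟨(u, v), rfl⟩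
    obtain ⟨q, hq⟩ := hmem
    exact ⟨q, hq.symm⟩
  have hT2S : ∀ u v : Fin (n + 1), ∃ q : Fin (n + 1) × Fin (n + 1),
      b u - r * b v = a q.1 + r * a q.2 := by
    intro u v
    have hmem : b u - r * b v ∈
        Set.range (fun p : Fin (n + 1) × Fin (n + 1) => a p.1 + r * a p.2) := by
      rw [hset]; exact ⟨(u, v), rfl⟩
    obtain ⟨q, hq⟩ := hmem
    exact ⟨q, hq.symm⟩
  have key : ∀ m : ℕ, ∀ hm : m < n + 1, b ⟨m, hm⟩ - r * b (Fin.last n) = a ⟨m, hm⟩ + r * a 0 := by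
    intro m
    induction m using Nat.strong_induction_on with
    | _ m ih =>
      intro hm
      set i : Fin (n + 1) := ⟨m, hm⟩ with hidef
      obtain ⟨⟨k, l⟩, hkl⟩ := hS2T i 0
      obtain ⟨⟨p, q⟩, hpq⟩ := hT2S i (Fin.last n)
      simp only at hkl hpq
      rcases lt_trichotomy (a i + r * a 0) (b i - r * b (Fin.last n)) with hlt | heq | hgt
      · exfalso
        have hbl : b l ≤ b (Fin.last n) := hb.monotone (Fin.le_last l)
        have hbk : b k < b i := by nlinarith
        have hki : k < i := hb.lt_iff_lt.mp hbk
        have hkm : (k : ℕ) < m := hki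
        have hindk : b k - r * b (Fin.last n) = a k + r * a 0 := by
          have := ih k.val hkm k.isLt
          simpa using this
        have heq2 : (fun p : Fin (n + 1) × Fin (n + 1) => r * b p.2 + a p.1) (i, l)
            = (fun p : Fin (n + 1) × Fin (n + 1) => r * b p.2 + a p.1) (k, Fin.last n) := by
          show r * b l + a i = r * b (Fin.last n) + a k
          linarith
        have := hinj2 heq2
        have hik : i = k := congrArg Prod.fst this
        rw [hik] at hki
        exact lt_irrefl k hki
      · exact heq.symm
      · exfalso
        have haq : a 0 ≤ a q := ha.monotone (Fin.zero_le q)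
        have hap : a p < a i := by nlinarith
        have hpi : p < i := ha.lt_iff_lt.mp hap
        have hpm : (p : ℕ) < m := hpi
        have hindp : b p - r * b (Fin.last n) = a p + r * a 0 := by
          have := ih p.val hpm p.isLt
          simpa using this
        have heq3 : (fun p : Fin (n + 1) × Fin (n + 1) => -(r * a p.1) + b p.2) (q, i)
            = (fun p : Fin (n + 1) × Fin (n + 1) => -(r * a p.1) + b p.2) (0, p) := by
          show -(r * a q) + b i = -(r * a 0) + b p
          linarith
        have := hinj3 heq3
        have hip : i = p := congrArg Prod.snd this
        rw [hip] at hpi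
        exact lt_irrefl p hpi
  intro i
  have := key i.val i.isLt
  simpa using this
end

section
/- Let A = {a_1,...,a_n} (strictly increasing) and B = {b_1,...,b_n} (strictly increasing) be sets of reals, r > 0. Suppose the set {a_i + r·a_j} = {b_i - r·b_j} with all n² elements distinct on each side, and the set {-r·a_i + b_j} has n² distinct elements. For each k choose s(k), t(k) with b_k - r·b_n = a_{s(k)} + r·a_{t(k)}. Then the map k ↦ s(k) is injective (hence a permutation of {1,...,n}). -/
/-- The map `k ↦ s k` from the decomposition `b k - r b_n = a (s k) + r a (t k)` is injective. -/
theorem stmt_2 (n : ℕ) (a b : Fin (n + 1) → ℝ) (r : ℝ) (hr : 0 < r)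
    (ha : StrictMono a) (hb : StrictMono b)
    (hset : Set.range (fun p : Fin (n + 1) × Fin (n + 1) => a p.1 + r * a p.2)
      = Set.range (fun p : Fin (n + 1) × Fin (n + 1) => b p.1 - r * b p.2))
    (hinjA : Function.Injective (fun p : Fin (n + 1) × Fin (n + 1) => a p.1 + r * a p.2))
    (hinjB : Function.Injective (fun p : Fin (n + 1) × Fin (n + 1) => b p.1 - r * b p.2))
    (hinj3 : Function.Injective (fun p : Fin (n + 1) × Fin (n + 1) => -(r * a p.1) + b p.2))
    (s t : Fin (n + 1) → Fin (n + 1))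
    (hst : ∀ k, b k - r * b (Fin.last n) = a (s k) + r * a (t k)) :
    Function.Injective s := by
  intro k1 k2 h
  have h1 := hst k1
  have h2 := hst k2
  rw [h] at h1
  have key : (fun p : Fin (n + 1) × Fin (n + 1) => -(r * a p.1) + b p.2) (t k1, k1)
      = (fun p : Fin (n + 1) × Fin (n + 1) => -(r * a p.1) + b p.2) (t k2, k2) := by
    simp only
    linarith
  have h3 := hinj3 key
  exact congrArg Prod.snd h3
end

section
/- Let A be a finite multiset of reals and D a real number. If Σ_{a ∈ A} t^a = Σ_{a ∈ A} t^{D - a} holds for all real t > 0, then as multisets A = { D - a : a ∈ A }. -/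
open Real

/-- The character `x ↦ x ^ a` on the multiplicative monoid of positive reals. -/
noncomputable def powChar (a : ℝ) : {x : ℝ // 0 < x} →* ℝ where
  toFun x := (x : ℝ) ^ a
  map_one' := by simp
  map_mul' x y := by
    simpa using Real.mul_rpow x.2.le y.2.le

lemma powChar_injective : Function.Injective powChar := by
  intro a b hab
  have h2 : (2 : ℝ) ^ a = (2 : ℝ) ^ b := by
    have := congrArg (fun f => f.toFun ⟨2, by norm_num⟩) hab
    simpa [powChar] using this
  rw [Real.rpow_def_of_pos (by norm_num : (0:ℝ) < 2),
    Real.rpow_def_of_pos (by norm_num : (0:ℝ) < 2)] at h2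
  have := Real.exp_injective h2
  exact mul_left_cancel₀ (Real.log_ne_zero_of_pos_of_ne_one (by norm_num) (by norm_num)) this

/-- General key lemma: equality of exponential sums for all positive `t` forces
multiset equality. -/
lemma multiset_eq_of_sum_rpow_eq (A B : Multiset ℝ)
    (h : ∀ t : ℝ, 0 < t →
      (A.map fun a => t ^ a).sum = (B.map fun a => t ^ a).sum) :
    A = B := by
  classical
  have li : LinearIndependent ℝ (fun a : ℝ => ⇑(powChar a)) :=
    (linearIndependent_monoidHom {x : ℝ // 0 < x} ℝ).comp powChar powChar_injective
  set s : Finset ℝ := A.toFinset ∪ B.toFinset with hs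
  set g : ℝ → ℝ := fun r => (A.count r : ℝ) - (B.count r : ℝ) with hg
  have key : ∀ r ∈ s, g r = 0 := by
    apply linearIndependent_iff'.mp li s g
    funext x
    have hsum : ∀ (C : Multiset ℝ), C.toFinset ⊆ s →
        (∑ r ∈ s, (C.count r : ℝ) * (x : ℝ) ^ r) = (C.map fun a => (x:ℝ) ^ a).sum := by
      intro C hC
      rw [Finset.sum_multiset_map_count]
      rw [← Finset.sum_subset hC]
      · exact Finset.sum_congr rfl fun r _ => by simp [nsmul_eq_mul]
      · intro r _ hr
        simp [Multiset.count_eq_zero_of_notMem (by simpa using hr)]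
    have h1 := hsum A (Finset.subset_union_left)
    have h2 := hsum B (Finset.subset_union_right)
    have hx := h x x.2
    simp only [Finset.sum_apply, Pi.smul_apply, Pi.zero_apply, smul_eq_mul]
    have : ∑ r ∈ s, g r * (x : ℝ) ^ r = 0 := by
      simp only [hg, sub_mul]
      rw [Finset.sum_sub_distrib, h1, h2, hx, sub_self]
    simpa [powChar] using this
  ext r
  by_cases hr : r ∈ s
  · have h0 := key r hr
    simp only [hg, sub_eq_zero] at h0
    exact_mod_cast h0
  · rw [Finset.mem_union, not_or] at hr
    rw [Multiset.count_eq_zero_of_notMem (by simpa using hr.1),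
      Multiset.count_eq_zero_of_notMem (by simpa using hr.2)]

/-- Equality of the exponential sums `Σ t^a = Σ t^(D - a)` for all `t > 0` forces
the multiset equality `A = D - A`. -/
theorem stmt_7 (A : Multiset ℝ) (D : ℝ)
    (h : ∀ t : ℝ, 0 < t →
      (A.map fun a => t ^ a).sum = (A.map fun a => t ^ (D - a)).sum) :
    A = A.map fun a => D - a := by
  apply multiset_eq_of_sum_rpow_eq
  intro t ht
  rw [Multiset.map_map]
  exact h t ht
end

section
/- Let a_1 < ... < a_n and b_1 < ... < b_n be reals, r > 0, and suppose b_i - r·b_n = a_i + r·a_1 holds for indices 1, ..., i-1 (inductive hypothesis) together with: {a_i + r·a_j} = {b_i - r·b_j} as sets of n² distinct elements, and the maps (i,j) ↦ a_i + r·b_j and (i,j) ↦ -r·a_i + b_j are injective. Then b_i - r·b_n = a_i + r·a_1 also holds at index i. -/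
/-- An injective map on `Fin m` fixing everything below `i` satisfies `i ≤ f i`. -/
lemma aux_ge {m : ℕ} (f : Fin m → Fin m) (hf : Function.Injective f)
    (i : Fin m) (hfix : ∀ j < i, f j = j) : i ≤ f i := by
  by_contra h
  push_neg at h
  have h2 : f (f i) = f i := hfix _ h
  have := hf h2
  rw [this] at h
  exact lt_irrefl _ h

/-- Inductive step of Lemma 2.2: if `b j - r b_n = a j + r a_1` holds for all `j < i`,
then it also holds at `i`. -/
theorem stmt_13 (n : ℕ) (a b : Fin (n + 1) → ℝ) (r : ℝ) (hr : 0 < r)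
    (ha : StrictMono a) (hb : StrictMono b)
    (hset : Set.range (fun p : Fin (n + 1) × Fin (n + 1) => a p.1 + r * a p.2)
      = Set.range (fun p : Fin (n + 1) × Fin (n + 1) => b p.1 - r * b p.2))
    (hinjA : Function.Injective (fun p : Fin (n + 1) × Fin (n + 1) => a p.1 + r * a p.2))
    (hinjB : Function.Injective (fun p : Fin (n + 1) × Fin (n + 1) => b p.1 - r * b p.2))
    (hinj2 : Function.Injective (fun p : Fin (n + 1) × Fin (n + 1) => a p.1 + r * b p.2))
    (hinj3 : Function.Injective (fun p : Fin (n + 1) × Fin (n + 1) => -(r * a p.1) + b p.2))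
    (i : Fin (n + 1))
    (IH : ∀ j < i, b j - r * b (Fin.last n) = a j + r * a 0) :
    b i - r * b (Fin.last n) = a i + r * a 0 := by
  classical
  -- choose (S j) with a (S j).1 + r * a (S j).2 = b j - r * b_n
  have hAex : ∀ j : Fin (n + 1), ∃ p : Fin (n + 1) × Fin (n + 1),
      a p.1 + r * a p.2 = b j - r * b (Fin.last n) := by
    intro j
    have : b j - r * b (Fin.last n)
        ∈ Set.range (fun p : Fin (n + 1) × Fin (n + 1) => a p.1 + r * a p.2) := by
      rw [hset]; exact ⟨(j, Fin.last n), rfl⟩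
    exact this
  choose S hS using hAex
  -- choose (U j) with b (U j).1 - r * b (U j).2 = a j + r * a 0
  have hBex : ∀ j : Fin (n + 1), ∃ p : Fin (n + 1) × Fin (n + 1),
      b p.1 - r * b p.2 = a j + r * a 0 := by
    intro j
    have : a j + r * a 0
        ∈ Set.range (fun p : Fin (n + 1) × Fin (n + 1) => b p.1 - r * b p.2) := by
      rw [← hset]; exact ⟨(j, 0), rfl⟩
    exact this
  choose U hU using hBex
  -- j ↦ (S j).1 is injective
  have hSinj : Function.Injective (fun j => (S j).1) := by
    intro j j' h
    simp only at h
    have e1 := hS j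
    have e2 := hS j'
    rw [h] at e1
    have key : -(r * a (S j).2) + b j = -(r * a (S j').2) + b j' := by linarith
    have := @hinj3 ((S j).2, j) ((S j').2, j') key
    exact (Prod.ext_iff.mp this).2
  -- j ↦ (U j).1 is injective
  have hUinj : Function.Injective (fun j => (U j).1) := by
    intro j j' h
    simp only at h
    have e1 := hU j
    have e2 := hU j'
    rw [h] at e1
    have key : a j + r * b (U j).2 = a j' + r * b (U j').2 := by linarith
    have := @hinj2 (j, (U j).2) (j', (U j').2) key
    exact (Prod.ext_iff.mp this).1
  -- below i, S fixes first coordinate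
  have hSfix : ∀ j < i, (S j).1 = j := by
    intro j hj
    have e1 := hS j
    rw [IH j hj] at e1
    have : S j = (j, 0) := @hinjA (S j) (j, (0 : Fin (n + 1))) e1
    rw [this]
  have hUfix : ∀ j < i, (U j).1 = j := by
    intro j hj
    have e1 := hU j
    rw [← IH j hj] at e1
    have : U j = (j, Fin.last n) :=
      @hinjB (U j) (j, Fin.last n) e1
    rw [this]
  have hSi : i ≤ (S i).1 := aux_ge _ hSinj i hSfix
  have hUi : i ≤ (U i).1 := aux_ge _ hUinj i hUfix
  -- two inequalities
  have ineq1 : a i + r * a 0 ≤ b i - r * b (Fin.last n) := by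
    have e := hS i
    have h1 : a i ≤ a (S i).1 := ha.monotone hSi
    have h2 : a 0 ≤ a (S i).2 := ha.monotone (Fin.zero_le _)
    nlinarith
  have ineq2 : b i - r * b (Fin.last n) ≤ a i + r * a 0 := by
    have e := hU i
    have h1 : b i ≤ b (U i).1 := hb.monotone hUi
    have h2 : b (U i).2 ≤ b (Fin.last n) := hb.monotone (Fin.le_last _)
    nlinarith
  linarith
end

section
/- Let A = {a_1,...,a_n} and B = {b_1,...,b_n} be finite sets of reals with all elements of A distinct and all elements of B distinct, and let r > 0 with r ≠ 1. Suppose B = A + C (b_i = a_i + C) and the multiset equality A + rA = B - rB holds. Then a_i + a_{n+1-i} is constant in i when A is listed in increasing order; equivalently, A is symmetric about (C(1-r))/(2r). -/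
open Filter Real Topology

/-- `exp (s*c) → 0` as `s → ∞` when `c < 0`. -/
lemma exp_mul_tendsto_zero {c : ℝ} (hc : c < 0) :
    Tendsto (fun s : ℝ => Real.exp (s * c)) atTop (𝓝 0) :=
  Real.tendsto_exp_atBot.comp ((tendsto_mul_const_atBot_of_neg hc).2 tendsto_id)

/-- If two strictly monotone tuples have equal exponential sums for all `s`, the value at
the last index coincides (≤ direction). -/
lemma last_le_of_expsum {n : ℕ} (d e : Fin (n + 1) → ℝ)
    (hd : StrictMono d) (he : StrictMono e)
    (hsum : ∀ s : ℝ, ∑ i, Real.exp (s * d i) = ∑ i, Real.exp (s * e i)) :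
    d (Fin.last n) ≤ e (Fin.last n) := by
  by_contra h
  push_neg at h
  -- consider `f s = Σ exp (s * (d i - d last)) = Σ exp (s * (e i - d last))`
  have h1 : Tendsto (fun s : ℝ => ∑ i, Real.exp (s * (d i - d (Fin.last n))))
      atTop (𝓝 1) := by
    have : Tendsto (fun s : ℝ => ∑ i, Real.exp (s * (d i - d (Fin.last n))))
        atTop (𝓝 (∑ i : Fin (n+1), if i = Fin.last n then (1:ℝ) else 0)) := by
      refine tendsto_finset_sum _ fun i _ => ?_
      rcases eq_or_ne i (Fin.last n) with rfl | hi
      · simp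
      · have hlt : d i < d (Fin.last n) := hd (Fin.lt_last_iff_ne_last.2 hi)
        simp only [hi, if_neg, if_false]
        exact exp_mul_tendsto_zero (by linarith)
    simpa using this
  have h2 : Tendsto (fun s : ℝ => ∑ i, Real.exp (s * (e i - d (Fin.last n))))
      atTop (𝓝 0) := by
    have : Tendsto (fun s : ℝ => ∑ i, Real.exp (s * (e i - d (Fin.last n))))
        atTop (𝓝 (∑ _i : Fin (n+1), (0:ℝ))) := by
      refine tendsto_finset_sum _ fun i _ => ?_
      have : e i ≤ e (Fin.last n) := he.monotone (Fin.le_last i)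
      exact exp_mul_tendsto_zero (by linarith)
    simpa using this
  have heq : (fun s : ℝ => ∑ i, Real.exp (s * (d i - d (Fin.last n))))
      = fun s : ℝ => ∑ i, Real.exp (s * (e i - d (Fin.last n))) := by
    funext s
    have := hsum s
    have hL : ∀ (c : Fin (n+1) → ℝ), ∑ i, Real.exp (s * (c i - d (Fin.last n)))
        = (∑ i, Real.exp (s * c i)) * Real.exp (-(s * d (Fin.last n))) := by
      intro c
      rw [Finset.sum_mul]
      refine Finset.sum_congr rfl fun i _ => ?_
      rw [← Real.exp_add]; ring_nf
    rw [hL d, hL e, this]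
  rw [heq] at h1
  have : (1:ℝ) = 0 := tendsto_nhds_unique h1 h2
  norm_num at this

/-- Two strictly monotone tuples with equal exponential sums are equal. -/
lemma eq_of_expsum : ∀ (n : ℕ) (d e : Fin n → ℝ), StrictMono d → StrictMono e →
    (∀ s : ℝ, ∑ i, Real.exp (s * d i) = ∑ i, Real.exp (s * e i)) → d = e := by
  intro n
  induction n with
  | zero => intro d e _ _ _; funext i; exact absurd i.2 (by omega)
  | succ n ih =>
    intro d e hd he hsum
    have hlast : d (Fin.last n) = e (Fin.last n) :=
      le_antisymm (last_le_of_expsum d e hd he hsum)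
        (last_le_of_expsum e d he hd fun s => (hsum s).symm)
    have hsum' : ∀ s : ℝ, ∑ i : Fin n, Real.exp (s * d i.castSucc)
        = ∑ i : Fin n, Real.exp (s * e i.castSucc) := by
      intro s
      have := hsum s
      rw [Fin.sum_univ_castSucc, Fin.sum_univ_castSucc, hlast] at this
      linarith
    have hcast : (fun i : Fin n => d i.castSucc) = fun i => e i.castSucc :=
      ih _ _ (hd.comp Fin.strictMono_castSucc) (he.comp Fin.strictMono_castSucc) hsum'
    funext i
    rcases Fin.lastCases (motive := fun i => d i = e i) hlast
      (fun j => congrFun hcast j) i with h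
    exact h

/-- Restatement of Lemma 2.1 in terms of the increasing enumeration of `A`:
`a i + a (n+1-i)` is constant, i.e. `A` is symmetric about `C(1-r)/(2r)`. -/
theorem stmt_15 (n : ℕ) (a b : Fin (n + 1) → ℝ) (C r : ℝ) (hr : 0 < r) (hr1 : r ≠ 1)
    (ha : StrictMono a) (hb : ∀ i, b i = a i + C)
    (hmul : Multiset.map (fun p : Fin (n + 1) × Fin (n + 1) => a p.1 + r * a p.2)
        Finset.univ.val
      = Multiset.map (fun p : Fin (n + 1) × Fin (n + 1) => b p.1 - r * b p.2)
        Finset.univ.val) :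
    ∀ i, a i + a (Fin.rev i) = C * (1 - r) / r := by
  have hrne : r ≠ 0 := ne_of_gt hr
  set m : ℝ := C * (1 - r) / (2 * r) with hm
  set F : ℝ → ℝ := fun t => ∑ i, Real.exp (t * a i) with hF
  have hFpos : ∀ t, 0 < F t := fun t =>
    Finset.sum_pos (fun i _ => Real.exp_pos _) ⟨0, Finset.mem_univ 0⟩
  -- exponential sums over pairs agree
  have h0 : ∀ s : ℝ, ∑ p : Fin (n+1) × Fin (n+1), Real.exp (s * (a p.1 + r * a p.2))
      = ∑ p : Fin (n+1) × Fin (n+1), Real.exp (s * (b p.1 - r * b p.2)) := by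
    intro s
    have key : ∀ (f : Fin (n+1) × Fin (n+1) → ℝ),
        ∑ p : Fin (n+1) × Fin (n+1), Real.exp (s * f p)
        = ((Finset.univ.val.map f).map (fun x => Real.exp (s * x))).sum := by
      intro f
      rw [Multiset.map_map]
      rfl
    rw [key, key, hmul]
  -- factor as products
  have h1 : ∀ s : ℝ, F s * F (r * s) = Real.exp (s * C * (1 - r)) * (F s * F (-(r * s))) := by
    intro s
    have hL : ∑ p : Fin (n+1) × Fin (n+1), Real.exp (s * (a p.1 + r * a p.2))
        = F s * F (r * s) := by
      rw [hF, Fintype.sum_prod_type, Finset.sum_mul_sum]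
      refine Finset.sum_congr rfl fun i _ => Finset.sum_congr rfl fun j _ => ?_
      rw [← Real.exp_add]
      congr 1
      ring
    have hR : ∑ p : Fin (n+1) × Fin (n+1), Real.exp (s * (b p.1 - r * b p.2))
        = Real.exp (s * C * (1 - r)) * (F s * F (-(r * s))) := by
      calc ∑ p : Fin (n+1) × Fin (n+1), Real.exp (s * (b p.1 - r * b p.2))
          = ∑ p : Fin (n+1) × Fin (n+1),
              Real.exp (s * C * (1 - r)) * (Real.exp (s * a p.1) * Real.exp (-(r * s) * a p.2)) :=
            Finset.sum_congr rfl fun p _ => by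
              rw [hb, hb, ← Real.exp_add, ← Real.exp_add]
              congr 1
              ring
        _ = Real.exp (s * C * (1 - r)) *
              ∑ p : Fin (n+1) × Fin (n+1), Real.exp (s * a p.1) * Real.exp (-(r * s) * a p.2) := by
            rw [Finset.mul_sum]
        _ = Real.exp (s * C * (1 - r)) * (F s * F (-(r * s))) := by
            rw [hF, Fintype.sum_prod_type, Finset.sum_mul_sum]
    rw [← hL, ← hR, h0]
  -- cancel F s
  have h2 : ∀ s : ℝ, F (r * s) = Real.exp (s * C * (1 - r)) * F (-(r * s)) := by
    intro s
    have h' : F s * F (r * s) = F s * (Real.exp (s * C * (1 - r)) * F (-(r * s))) := by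
      rw [h1 s]; ring
    exact mul_left_cancel₀ (hFpos s).ne' h'
  have h3 : ∀ t : ℝ, F t = Real.exp (2 * t * m) * F (-t) := by
    intro t
    have h' := h2 (t / r)
    rw [mul_div_cancel₀ _ hrne] at h'
    rw [h']
    congr 2
    rw [hm]
    field_simp
  -- symmetric exponential sums
  have h4 : ∀ s : ℝ, ∑ i, Real.exp (s * (a i - m))
      = ∑ i, Real.exp (s * (m - a (Fin.rev i))) := by
    intro s
    have e1 : ∑ i, Real.exp (s * (a i - m)) = F s * Real.exp (-(s * m)) := by
      rw [hF, Finset.sum_mul]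
      refine Finset.sum_congr rfl fun i _ => ?_
      rw [← Real.exp_add]
      congr 1
      ring
    have e2 : ∑ i, Real.exp (s * (m - a (Fin.rev i))) = F (-s) * Real.exp (s * m) := by
      rw [Fintype.sum_equiv (Fin.revPerm : Equiv.Perm (Fin (n+1)))
        (fun i => Real.exp (s * (m - a (Fin.rev i))))
        (fun i => Real.exp ((-s) * a i) * Real.exp (s * m))
        (fun i => by
          simp only [Fin.revPerm_apply, Fin.rev_rev, ← Real.exp_add]
          congr 1
          ring)]
      rw [hF, Finset.sum_mul]
    rw [e1, e2, h3 s, mul_assoc, mul_comm (Real.exp (2 * s * m)), mul_assoc, ← Real.exp_add]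
    congr 2
    ring
  -- conclude equality of the tuples
  have hd : StrictMono (fun i => a i - m) := fun i j hij => by
    simpa using ha hij
  have he : StrictMono (fun i : Fin (n+1) => m - a (Fin.rev i)) := fun i j hij => by
    have h5 : Fin.rev j < Fin.rev i := Fin.rev_lt_rev.2 hij
    have := ha h5
    simpa using this
  have heq := eq_of_expsum (n+1) _ _ hd he h4
  intro i
  have hi := congrFun heq i
  have : a i + a (Fin.rev i) = 2 * m := by linarith [hi]
  rw [this, hm]
  field_simp
end

section
/- Let A, B be finite multisets of reals of the same cardinality and r > 0 with r ≠ 1. Suppose A + rA = B - rB as multisets and B = A + C for a constant C. Then the functional equation A(t) = t^{C(1-r)/r}·A(1/t) holds for all t > 0, where A(t) = Σ_{a ∈ A} t^a. -/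
/-- If `A + rA = B - rB` as multisets and `B = A + C`, then
`A(t) = t^{C(1-r)/r} A(1/t)` for all `t > 0`. -/
theorem stmt_18 (n : ℕ) (a b : Fin n → ℝ) (C r : ℝ) (hr : 0 < r) (hr1 : r ≠ 1)
    (hb : ∀ i, b i = a i + C)
    (hmul : Multiset.map (fun p : Fin n × Fin n => a p.1 + r * a p.2) Finset.univ.val
      = Multiset.map (fun p : Fin n × Fin n => b p.1 - r * b p.2) Finset.univ.val) :
    ∀ t : ℝ, 0 < t →
      (∑ i, t ^ a i) = t ^ (C * (1 - r) / r) * ∑ i, t ^ (-a i) := by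
  intro t ht
  rcases Nat.eq_zero_or_pos n with hn | hn
  · subst hn; simp
  have hrne : r ≠ 0 := ne_of_gt hr
  set x : ℝ := t ^ (1 / r) with hxdef
  have hx : 0 < x := Real.rpow_pos_of_pos ht _
  have hrx : ∀ s : ℝ, x ^ s = t ^ (s / r) := by
    intro s
    rw [hxdef, ← Real.rpow_mul ht.le]
    congr 1; field_simp
  have h : ∑ p : Fin n × Fin n, x ^ (a p.1 + r * a p.2)
      = ∑ p : Fin n × Fin n, x ^ (b p.1 - r * b p.2) := by
    have h0 := congrArg (fun m : Multiset ℝ => (m.map (fun s => x ^ s)).sum) hmul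
    simp only [Multiset.map_map] at h0
    exact h0
  have hL : ∑ p : Fin n × Fin n, x ^ (a p.1 + r * a p.2)
      = (∑ i, x ^ a i) * (∑ j, x ^ (r * a j)) := by
    rw [Fintype.sum_prod_type, Finset.sum_mul_sum]
    exact Finset.sum_congr rfl fun i _ => Finset.sum_congr rfl fun j _ => Real.rpow_add hx _ _
  have hR : ∑ p : Fin n × Fin n, x ^ (b p.1 - r * b p.2)
      = x ^ (C * (1 - r)) * ((∑ i, x ^ a i) * (∑ j, x ^ (-(r * a j)))) := by
    rw [Fintype.sum_prod_type]
    have hpt : ∀ (i j : Fin n),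
        x ^ (b i - r * b j) = x ^ (C * (1 - r)) * (x ^ a i * x ^ (-(r * a j))) := by
      intro i j
      rw [← Real.rpow_add hx, ← Real.rpow_add hx, hb, hb]
      congr 1; ring
    simp_rw [hpt, ← Finset.mul_sum, ← Finset.sum_mul]
    try ring
  have hApos : 0 < ∑ i, x ^ a i :=
    Finset.sum_pos (fun i _ => Real.rpow_pos_of_pos hx _)
      (Finset.univ_nonempty_iff.mpr ⟨⟨0, hn⟩⟩)
  have key : ∑ j, x ^ (r * a j) = x ^ (C * (1 - r)) * ∑ j, x ^ (-(r * a j)) := by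
    have h2 : (∑ i, x ^ a i) * (∑ j, x ^ (r * a j))
        = (∑ i, x ^ a i) * (x ^ (C * (1 - r)) * ∑ j, x ^ (-(r * a j))) := by
      rw [← hL, h, hR]; ring
    exact mul_left_cancel₀ (ne_of_gt hApos) h2
  have e1 : ∀ j, x ^ (r * a j) = t ^ a j := by
    intro j; rw [hrx]; congr 1; field_simp; try ring
  have e2 : ∀ j, x ^ (-(r * a j)) = t ^ (-a j) := by
    intro j; rw [hrx]; congr 1; field_simp; try ring
  have e3 : x ^ (C * (1 - r)) = t ^ (C * (1 - r) / r) := hrx _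
  simp_rw [e1, e2, e3] at key
  exact key
end
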